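/- arXiv:2102.10909 — 4 statements merged into one kernel-verified Lean document; each statement's English description precedes it below -/
import Mathlib

section
/- Let L ≥ 1, let Ω ⊆ ℝ^L be a nonempty open connected set, and let f : ℝ^L → ℝ be real-analytic on a neighborhood of every point of Ω. If the set {ω ∈ Ω : f(ω) = 0} has positive Lebesgue measure, then f(ω) = 0 for every ω ∈ Ω. -/
/-!
By the Lebesgue density theorem, in the version for balls whose centres may move, almost every
point `x` of the zero set `Z` has the following property: for all `y` and `δ > 0`, `Z` meets the
ball `closedBall (x + r • y) (r * δ)` for arbitrarily small `r > 0`. Pick such an `x`. If `f` did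
not vanish near `x`, let `g` be the first nonzero homogeneous term, of degree `k`, of the Taylor
expansion of `f` at `x`, and `y` a point with `g y ≠ 0`. Since `f (x + h) = g h + O(‖h‖ ^ (k + 1))`
and `|g| ≥ c > 0` near `y`, `f (x + r • y') ≠ 0` for `y'` close to `y` and `r` small: these balls
avoid `Z`, a contradiction. Hence `f` vanishes near `x`, so on all of the connected set `Ω` by
the identity theorem.
-/

open MeasureTheory Metric Filter Set
open scoped Topology Pointwise

theorem IsUnifLocDoublingMeasure.ae_frequently_inter_closedBall_add_smul_nonempty
    {E : Type*} [NormedAddCommGroup E] [NormedSpace ℝ E] [MeasurableSpace E] [BorelSpace E]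
    [SecondCountableTopology E] (μ : Measure E) [IsUnifLocDoublingMeasure μ]
    [IsLocallyFiniteMeasure μ] (S : Set E) :
    ∀ᵐ x ∂μ.restrict S, ∀ (y : E), ∀ δ > 0,
      ∃ᶠ r in 𝓝[>] (0 : ℝ), (S ∩ closedBall (x + r • y) (r * δ)).Nonempty := by
  filter_upwards [ae_all_iff.2 fun K : ℕ => ae_tendsto_measure_inter_div μ S K]
    with x hx y δ hδ
  obtain ⟨K, hK⟩ := exists_nat_ge (‖y‖ / δ)
  have hradius : Tendsto (fun r : ℝ => r * δ) (𝓝[>] 0) (𝓝[>] 0) := by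
    simpa using TendstoNhdsWithinIoi.mul_const hδ (tendsto_id (x := 𝓝[>] (0 : ℝ)))
  have hcenter : ∀ᶠ r in 𝓝[>] (0 : ℝ), x ∈ closedBall (x + r • y) (K * (r * δ)) := by
    filter_upwards [self_mem_nhdsWithin] with r (hr : 0 < r)
    rw [mem_closedBall, dist_self_add_right, norm_smul, Real.norm_of_nonneg hr.le]
    calc r * ‖y‖ = ‖y‖ / δ * (r * δ) := by field_simp
      _ ≤ K * (r * δ) := by gcongr
  intro hempty
  have hzero : Tendsto (fun r : ℝ => μ (S ∩ closedBall (x + r • y) (r * δ)) /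
      μ (closedBall (x + r • y) (r * δ))) (𝓝[>] 0) (𝓝 0) :=
    tendsto_const_nhds.congr' <| hempty.mono fun r hr => by
      simp only [not_nonempty_iff_eq_empty.1 hr, measure_empty, ENNReal.zero_div]
  exact zero_ne_one (tendsto_nhds_unique hzero (hx K _ _ hradius hcenter))

section PowerSeries

variable {𝕜 E F : Type*} [NontriviallyNormedField 𝕜] [NormedAddCommGroup E] [NormedSpace 𝕜 E]
  [NormedAddCommGroup F] [NormedSpace 𝕜 F]

theorem HasFPowerSeriesAt.exists_apply_ne_zero {f : E → F} {p : FormalMultilinearSeries 𝕜 E F}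
    {x : E} (hf : HasFPowerSeriesAt f p x) (h : ¬ ∀ᶠ z in 𝓝 x, f z = 0) :
    ∃ n y, p n (fun _ => y) ≠ 0 := by
  contrapose! h
  filter_upwards [hf.eventually_hasSum_sub] with z hz
  rw [show (fun n => p n fun _ => z - x) = 0 from funext fun n => h n _] at hz
  exact hz.unique hasSum_zero

theorem FormalMultilinearSeries.partialSum_succ_of_forall_lt_eq_zero
    {p : FormalMultilinearSeries 𝕜 E F} {k : ℕ} (h : ∀ n < k, ∀ y, p n (fun _ => y) = 0)
    (y : E) : p.partialSum (k + 1) y = p k (fun _ => y) := by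
  rw [FormalMultilinearSeries.partialSum, Finset.sum_range_succ,
    Finset.sum_eq_zero fun n hn => h n (Finset.mem_range.1 hn) y, zero_add]

theorem ContinuousMultilinearMap.apply_smul_diag {k : ℕ} (q : E [×k]→L[𝕜] F) (t : 𝕜) (y : E) :
    q (fun _ => t • y) = t ^ k • q (fun _ => y) := by
  simpa using q.map_smul_univ (fun _ => t) (fun _ => y)

end PowerSeries

section Analytic

variable {E F : Type*} [NormedAddCommGroup E] [NormedSpace ℝ E]
  [NormedAddCommGroup F] [NormedSpace ℝ F]

theorem eventually_forall_closedBall_smul_ne_zero_of_isBigO {φ g : E → F} {k : ℕ} {y₀ : E}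
    (hg : ContinuousAt g y₀) (hhom : ∀ (t : ℝ) y, g (t • y) = t ^ k • g y) (hy₀ : g y₀ ≠ 0)
    (hφ : (fun z => φ z - g z) =O[𝓝 0] fun z => ‖z‖ ^ (k + 1)) :
    ∃ δ > 0, ∀ᶠ r in 𝓝[>] (0 : ℝ), ∀ z ∈ closedBall (r • y₀) (r * δ), φ z ≠ 0 := by
  set c := ‖g y₀‖
  have hc : 0 < c := norm_pos_iff.2 hy₀
  obtain ⟨δ, hδ, hgδ⟩ : ∃ δ > 0, ∀ y ∈ closedBall y₀ δ, c / 2 < ‖g y‖ :=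
    nhds_basis_closedBall.mem_iff.1 (hg.norm.eventually (lt_mem_nhds (half_lt_self hc)))
  obtain ⟨C, hC, hCφ⟩ := hφ.exists_pos
  obtain ⟨ε, hε, hεφ⟩ := Metric.eventually_nhds_iff_ball.1 hCφ.bound
  set M := ‖y₀‖ + δ
  have hsmall (a b : ℝ) (ha : 0 < a) : ∀ᶠ r in 𝓝 (0 : ℝ), r * b < a :=
    (continuous_mul_const b).tendsto' 0 0 (zero_mul b) |>.eventually (gt_mem_nhds ha)
  refine ⟨δ, hδ, ?_⟩
  filter_upwards [self_mem_nhdsWithin, nhdsWithin_le_nhds (hsmall ε M hε),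
    nhdsWithin_le_nhds (hsmall (c / 2) (C * M ^ (k + 1)) (half_pos hc))]
    with r (hr : 0 < r) hrε hrc
  have hball : closedBall (r • y₀) (r * δ) = r • closedBall y₀ δ := by
    rw [smul_closedBall _ _ hδ.le, Real.norm_of_nonneg hr.le]
  rw [hball]
  rintro _ ⟨y, hy, rfl⟩ hφ0
  have hyM : ‖y‖ ≤ M := by
    linarith [norm_le_norm_add_norm_sub' y y₀, mem_closedBall_iff_norm.1 hy]
  have hlower : r ^ k * (c / 2) < ‖g (r • y)‖ := by
    rw [hhom, norm_smul, norm_pow, Real.norm_of_nonneg hr.le]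
    exact mul_lt_mul_of_pos_left (hgδ y hy) (pow_pos hr k)
  have hupper : ‖g (r • y)‖ ≤ r ^ k * (r * (C * M ^ (k + 1))) := by
    have hry : ‖r • y‖ ≤ r * M := by
      rw [norm_smul, Real.norm_of_nonneg hr.le]
      exact mul_le_mul_of_nonneg_left hyM hr.le
    calc ‖g (r • y)‖ = ‖φ (r • y) - g (r • y)‖ := by rw [hφ0, zero_sub, norm_neg]
      _ ≤ C * ‖r • y‖ ^ (k + 1) := by
        simpa using hεφ (r • y) (mem_ball_zero_iff.2 (hry.trans_lt hrε))
      _ ≤ C * (r * M) ^ (k + 1) := by gcongr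
      _ = r ^ k * (r * (C * M ^ (k + 1))) := by rw [mul_pow, pow_succ]; ring
  have := mul_lt_mul_of_pos_left hrc (pow_pos hr k)
  linarith

theorem AnalyticAt.exists_eventually_forall_closedBall_add_smul_ne_zero {f : E → F} {x : E}
    (hf : AnalyticAt ℝ f x) (h : ¬ ∀ᶠ z in 𝓝 x, f z = 0) :
    ∃ y, ∃ δ > 0, ∀ᶠ r in 𝓝[>] (0 : ℝ), ∀ z ∈ closedBall (x + r • y) (r * δ), f z ≠ 0 := by
  classical
  obtain ⟨p, hp⟩ := hf
  have hex := hp.exists_apply_ne_zero h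
  obtain ⟨y, hy⟩ := Nat.find_spec hex
  have hlow : ∀ n < Nat.find hex, ∀ y, p n (fun _ => y) = 0 := fun n hn => by
    simpa using Nat.find_min hex hn
  have hO := hp.isBigO_sub_partialSum_pow (Nat.find hex + 1)
  simp only [FormalMultilinearSeries.partialSum_succ_of_forall_lt_eq_zero hlow] at hO
  obtain ⟨δ, hδ, hcone⟩ := eventually_forall_closedBall_smul_ne_zero_of_isBigO
    ((p _).cont.comp (continuous_pi fun _ => continuous_id)).continuousAt
    (p _).apply_smul_diag hy hO
  refine ⟨y, δ, hδ, hcone.mono fun r hr z hz => ?_⟩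
  simpa using hr (z - x) (by rwa [mem_closedBall, dist_eq_norm, sub_sub, ← dist_eq_norm])

end Analytic

theorem analyticOnNhd_eq_zero_of_pos_measure_zero_set_general
    (L : ℕ)
    (Ω : Set (EuclideanSpace ℝ (Fin L)))
    (hconn : IsConnected Ω)
    (f : EuclideanSpace ℝ (Fin L) → ℝ)
    (hf : AnalyticOnNhd ℝ f Ω)
    (hpos : 0 < volume {ω ∈ Ω | f ω = 0}) :
    ∀ ω ∈ Ω, f ω = 0 := by
  set Z := {ω ∈ Ω | f ω = 0}
  obtain ⟨x, hxZ, hx⟩ := Measure.exists_mem_of_measure_ne_zero_of_ae hpos.ne'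
    (IsUnifLocDoublingMeasure.ae_frequently_inter_closedBall_add_smul_nonempty volume Z)
  refine fun ω hω =>
    hf.eqOn_zero_of_preconnected_of_eventuallyEq_zero hconn.isPreconnected hxZ.1 ?_ hω
  by_contra hlocal
  obtain ⟨y, δ, hδ, hcone⟩ :=
    (hf x hxZ.1).exists_eventually_forall_closedBall_add_smul_ne_zero hlocal
  obtain ⟨r, ⟨z, hzZ, hz⟩, hr⟩ := ((hx y δ hδ).and_eventually hcone).exists
  exact hr z hz hzZ.2

/-- If a function that is real-analytic on a neighborhood of every point of a nonempty open
connected set `Ω ⊆ ℝ^L` vanishes on a subset of `Ω` of positive Lebesgue measure, then it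
vanishes identically on `Ω`. -/
theorem analyticOnNhd_eq_zero_of_pos_measure_zero_set
    (L : ℕ) (hL : 1 ≤ L)
    (Ω : Set (EuclideanSpace ℝ (Fin L)))
    (hne : Ω.Nonempty) (hopen : IsOpen Ω) (hconn : IsConnected Ω)
    (f : EuclideanSpace ℝ (Fin L) → ℝ)
    (hf : AnalyticOnNhd ℝ f Ω)
    (hpos : 0 < volume {ω ∈ Ω | f ω = 0}) :
    ∀ ω ∈ Ω, f ω = 0 :=
  analyticOnNhd_eq_zero_of_pos_measure_zero_set_general L Ω hconn f hf hpos
end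

section
/- Let M ∈ ℕ, E = EuclideanSpace ℝ (Fin M), (Ω, ℱ, μ) a probability space, and 𝔪 ⊆ ℱ a sub-σ-algebra. Let W : E → ℝ be continuously differentiable, g : Ω → E Bochner integrable, and let b : Ω → E be an 𝔪-strongly-measurable version of the conditional expectation μ[g | 𝔪]. Fix a ∈ E and define c(u, v) = W(v) − W(u) + ⟨∇W(u), u − v⟩. Assume that W∘g, W∘b, ω ↦ ⟨∇W(b(ω)), g(ω)⟩ and ω ↦ ⟨∇W(b(ω)), b(ω)⟩ are μ-integrable. Then, μ-almost everywhere, μ[ ω ↦ c(a, g(ω)) − c(b(ω), g(ω)) | 𝔪 ] = (ω ↦ c(a, b(ω))). -/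
/-!
By the three-point identity for Bregman costs,
`c(a, g) - c(b, g) = c(a, b) + ⟪∇W(a) - ∇W(b), b - g⟫`.
The first term is `𝔪`-measurable, so it is its own conditional expectation. In the second,
`∇W(a) - ∇W(b)` is `𝔪`-measurable and can be pulled out, leaving `μ[b - g | 𝔪] = 0`.
-/

open MeasureTheory
open scoped RealInnerProductSpace

section Bregman

variable {E : Type*} [NormedAddCommGroup E] [InnerProductSpace ℝ E] [CompleteSpace E]
  {Ω : Type*} {m m₀ : MeasurableSpace Ω} {μ : Measure Ω}

theorem ContDiff.continuous_gradient {W : E → ℝ} (hW : ContDiff ℝ 1 W) :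
    Continuous (gradient W) :=
  (InnerProductSpace.toDual ℝ E).symm.continuous.comp (hW.continuous_fderiv one_ne_zero)

noncomputable def bregmanCost (W : E → ℝ) (u v : E) : ℝ :=
  W v - W u + ⟪gradient W u, u - v⟫

theorem bregmanCost_sub_bregmanCost (W : E → ℝ) (a u v : E) :
    bregmanCost W a v - bregmanCost W u v
      = bregmanCost W a u + ⟪gradient W a - gradient W u, u - v⟫ := by
  simp only [bregmanCost, inner_sub_left, inner_sub_right]
  ring

theorem condExp_inner_sub_ae_eq_zero (hm : m ≤ m₀) [SigmaFinite (μ.trim hm)] {f g b : Ω → E}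
    (hf : StronglyMeasurable[m] f) (hg : Integrable g μ) (hb_meas : StronglyMeasurable[m] b)
    (hb : b =ᵐ[μ] μ[g | m]) (hfbg : Integrable (fun ω ↦ ⟪f ω, b ω - g ω⟫) μ) :
    μ[fun ω ↦ ⟪f ω, b ω - g ω⟫ | m] =ᵐ[μ] 0 := by
  have hb_int : Integrable b μ := integrable_condExp.congr hb.symm
  have h_residual : μ[b - g | m] =ᵐ[μ] 0 := by
    filter_upwards [condExp_sub hb_int hg m, hb] with ω hω hbω
    rw [hω, Pi.sub_apply, condExp_of_stronglyMeasurable hm hb_meas hb_int, hbω, sub_self,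
      Pi.zero_apply]
  filter_upwards [condExp_bilin_of_stronglyMeasurable_left (innerSL ℝ) hf hfbg (hb_int.sub hg),
    h_residual] with ω hω hrω
  calc μ[fun ω ↦ ⟪f ω, b ω - g ω⟫ | m] ω = ⟪f ω, μ[b - g | m] ω⟫ := hω
    _ = 0 := by rw [hrω, Pi.zero_apply, inner_zero_right]

theorem condExp_bregmanCost_sub_ae_eq (hm : m ≤ m₀) [IsFiniteMeasure μ] {W : E → ℝ}
    (hW : ContDiff ℝ 1 W) {g b : Ω → E} (hg : Integrable g μ) (hb_meas : StronglyMeasurable[m] b)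
    (hb : b =ᵐ[μ] μ[g | m]) (a : E) (hWb : Integrable (fun ω ↦ W (b ω)) μ)
    (hgrad_g : Integrable (fun ω ↦ ⟪gradient W (b ω), g ω⟫) μ)
    (hgrad_b : Integrable (fun ω ↦ ⟪gradient W (b ω), b ω⟫) μ) :
    μ[fun ω ↦ bregmanCost W a (g ω) - bregmanCost W (b ω) (g ω) | m]
      =ᵐ[μ] fun ω ↦ bregmanCost W a (b ω) := by
  have hb_int : Integrable b μ := integrable_condExp.congr hb.symm
  have hgrad_meas : StronglyMeasurable[m] fun ω ↦ gradient W (b ω) :=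
    hW.continuous_gradient.comp_stronglyMeasurable hb_meas
  have hcost_meas : StronglyMeasurable[m] fun ω ↦ bregmanCost W a (b ω) :=
    ((hW.continuous.comp_stronglyMeasurable hb_meas).sub stronglyMeasurable_const).add
      ((innerSL ℝ (gradient W a)).continuous.comp_stronglyMeasurable
        (stronglyMeasurable_const.sub hb_meas))
  have hinner_a : ∀ {f : Ω → E}, Integrable f μ → Integrable (fun ω ↦ ⟪gradient W a, f ω⟫) μ :=
    fun hf ↦ (innerSL ℝ (gradient W a)).integrable_comp hf
  have hcost_int : Integrable (fun ω ↦ bregmanCost W a (b ω)) μ :=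
    (hWb.sub (integrable_const _)).add (hinner_a ((integrable_const a).sub hb_int))
  have hcross_int : Integrable (fun ω ↦ ⟪gradient W a - gradient W (b ω), b ω - g ω⟫) μ := by
    refine (((hinner_a hb_int).sub (hinner_a hg)).sub (hgrad_b.sub hgrad_g)).congr
      (ae_of_all _ fun ω ↦ ?_)
    simp only [Pi.sub_apply, inner_sub_left, inner_sub_right]
    ring
  simp_rw [bregmanCost_sub_bregmanCost]
  refine (condExp_add hcost_int hcross_int m).trans ?_
  filter_upwards [condExp_inner_sub_ae_eq_zero (f := fun ω ↦ gradient W a - gradient W (b ω)) hm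
    (stronglyMeasurable_const.sub hgrad_meas) hg hb_meas hb hcross_int] with ω hcross
  rw [Pi.add_apply, hcross, condExp_of_stronglyMeasurable hm hcost_meas hcost_int, Pi.zero_apply,
    add_zero]

end Bregman

theorem condexp_bregman_cost_identity_general
    {M : ℕ} {Ω : Type*} {ℱ : MeasurableSpace Ω}
    (μ : Measure Ω) [IsProbabilityMeasure μ]
    (𝔪 : MeasurableSpace Ω) (h𝔪 : 𝔪 ≤ ℱ)
    (W : EuclideanSpace ℝ (Fin M) → ℝ) (hW : ContDiff ℝ 1 W)
    (g : Ω → EuclideanSpace ℝ (Fin M)) (hg : Integrable g μ)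
    (b : Ω → EuclideanSpace ℝ (Fin M))
    (hbmeas : StronglyMeasurable[𝔪] b)
    (hb : b =ᵐ[μ] μ[g | 𝔪])
    (a : EuclideanSpace ℝ (Fin M))
    (c : EuclideanSpace ℝ (Fin M) → EuclideanSpace ℝ (Fin M) → ℝ)
    (hc : ∀ u v, c u v = W v - W u + ⟪gradient W u, u - v⟫)
    (hint2 : Integrable (fun ω => W (b ω)) μ)
    (hint3 : Integrable (fun ω => ⟪gradient W (b ω), g ω⟫) μ)
    (hint4 : Integrable (fun ω => ⟪gradient W (b ω), b ω⟫) μ) :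
    μ[fun ω => c a (g ω) - c (b ω) (g ω) | 𝔪] =ᵐ[μ] fun ω => c a (b ω) := by
  obtain rfl : c = bregmanCost W := funext₂ hc
  exact condExp_bregmanCost_sub_ae_eq h𝔪 hW hg hbmeas hb a hint2 hint3 hint4

/-- Conditional Bregman cost identity: if `b` is an `𝔪`-measurable version of the
conditional expectation `μ[g | 𝔪]`, then, a.e., the conditional expectation of the excess
Bregman cost of a fixed action `a` over that of `b` equals `c(a, b(ω))`. -/
theorem condexp_bregman_cost_identity
    {M : ℕ} {Ω : Type*} {ℱ : MeasurableSpace Ω}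
    (μ : Measure Ω) [IsProbabilityMeasure μ]
    (𝔪 : MeasurableSpace Ω) (h𝔪 : 𝔪 ≤ ℱ)
    (W : EuclideanSpace ℝ (Fin M) → ℝ) (hW : ContDiff ℝ 1 W)
    (g : Ω → EuclideanSpace ℝ (Fin M)) (hg : Integrable g μ)
    (b : Ω → EuclideanSpace ℝ (Fin M))
    (hbmeas : StronglyMeasurable[𝔪] b)
    (hb : b =ᵐ[μ] μ[g | 𝔪])
    (a : EuclideanSpace ℝ (Fin M))
    (c : EuclideanSpace ℝ (Fin M) → EuclideanSpace ℝ (Fin M) → ℝ)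
    (hc : ∀ u v, c u v = W v - W u + ⟪gradient W u, u - v⟫)
    (hint1 : Integrable (fun ω => W (g ω)) μ)
    (hint2 : Integrable (fun ω => W (b ω)) μ)
    (hint3 : Integrable (fun ω => ⟪gradient W (b ω), g ω⟫) μ)
    (hint4 : Integrable (fun ω => ⟪gradient W (b ω), b ω⟫) μ) :
    μ[fun ω => c a (g ω) - c (b ω) (g ω) | 𝔪] =ᵐ[μ] fun ω => c a (b ω) :=
  condexp_bregman_cost_identity_general μ 𝔪 h𝔪 W hW g hg b hbmeas hb a c hc hint2 hint3 hint4
end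

section
/- Let M, ν ∈ ℕ with ν ≤ M, let 0 < ε < 1, let X ⊆ EuclideanSpace ℝ (Fin M) be a convex set, and let W : EuclideanSpace ℝ (Fin M) → ℝ be twice continuously differentiable such that for every a ∈ X and every v, |iteratedDeriv 2 (t ↦ W(a + t • v)) 0 − Q(v)| ≤ ε‖v‖², where Q(v) = ∑_{i < ν} (v i)² − ∑_{ν ≤ i < M} (v i)². Then for every set Ξ ⊆ X that is W-convex (i.e. W(t·a₁ + (1−t)·a₂) ≤ t·W(a₁) + (1−t)·W(a₂) for all a₁, a₂ ∈ Ξ and t ∈ [0,1]), the Hausdorff dimension of Ξ satisfies dimH Ξ ≤ ν. -/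
/-!
Midpoint W-convexity of `a₁, a₂ ∈ Ξ` makes the second difference of `W` along `[a₁, a₂]`
nonnegative, while the Hessian bound makes it at most `(Q v + ε‖v‖²) / 4`, where
`v = a₂ - a₁`. Since `Q v = 2‖P v‖² - ‖v‖²` for the projection `P` onto the first `ν`
coordinates, this gives `(1 - ε)‖v‖² ≤ 2‖P v‖²`: `P` is antilipschitz on `Ξ`, hence
`dimH Ξ ≤ dimH ℝ^ν = ν`.
-/

open Set
open scoped ENNReal

lemma add_sub_two_mul_half_le_of_iteratedDeriv_two_le {g : ℝ → ℝ} (hg : ContDiff ℝ 2 g)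
    {c : ℝ} (hc : ∀ s ∈ Icc (0 : ℝ) 1, iteratedDeriv 2 g s ≤ c) :
    g 0 + g 1 - 2 * g (1 / 2) ≤ c / 4 := by
  have hg' : ∀ t, HasDerivAt g (deriv g t) t :=
    fun t => (hg.differentiable (by norm_num) t).hasDerivAt
  have hg'' : ∀ t, HasDerivAt (deriv g) (iteratedDeriv 2 g t) t := fun t => by
    rw [iteratedDeriv_succ, iteratedDeriv_one]
    exact ((hg.iterate_deriv' 1 1).differentiable (by norm_num) t).hasDerivAt
  have hconc : ConcaveOn ℝ (Icc 0 1) fun t => g t - c / 2 * t ^ 2 := by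
    refine concaveOn_of_hasDerivWithinAt2_nonpos (convex_Icc 0 1)
      (hg.continuous.sub (by fun_prop)).continuousOn
      (f' := fun t => deriv g t - c * t) (f'' := fun t => iteratedDeriv 2 g t - c)
      (fun t _ => ((hg' t).sub ?_).hasDerivWithinAt)
      (fun t _ => ((hg'' t).sub ?_).hasDerivWithinAt)
      (fun t ht => sub_nonpos.2 (hc t (interior_subset ht)))
    · exact ((hasDerivAt_pow 2 t).const_mul (c / 2)).congr_deriv (by push_cast; ring)
    · simpa using (hasDerivAt_id t).const_mul c
  have := hconc.2 (left_mem_Icc.2 zero_le_one) (right_mem_Icc.2 zero_le_one)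
    (by norm_num : (0 : ℝ) ≤ 1 / 2) (by norm_num : (0 : ℝ) ≤ 1 / 2) (by norm_num)
  norm_num at this
  linarith

lemma nonneg_of_midpoint_le_of_iteratedDeriv_two_le {E : Type*} [NormedAddCommGroup E]
    [NormedSpace ℝ E] {W : E → ℝ} (hW : ContDiff ℝ 2 W) {a₁ a₂ : E} {c : ℝ}
    (hc : ∀ a ∈ segment ℝ a₁ a₂, iteratedDeriv 2 (fun t : ℝ => W (a + t • (a₂ - a₁))) 0 ≤ c)
    (hmid : W (midpoint ℝ a₁ a₂) ≤ (W a₁ + W a₂) / 2) :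
    0 ≤ c := by
  set g : ℝ → ℝ := fun t => W (a₁ + t • (a₂ - a₁))
  have hg : ContDiff ℝ 2 g := hW.comp (by fun_prop)
  have hgc : ∀ s ∈ Icc (0 : ℝ) 1, iteratedDeriv 2 g s ≤ c := by
    intro s hs
    have hshift : iteratedDeriv 2 g s =
        iteratedDeriv 2 (fun t : ℝ => W ((a₁ + s • (a₂ - a₁)) + t • (a₂ - a₁))) 0 := by
      simp only [g, add_assoc, ← add_smul, iteratedDeriv_comp_const_add (f := g), add_zero]
    rw [hshift]
    exact hc _ (segment_eq_image' ℝ a₁ a₂ ▸ mem_image_of_mem _ hs)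
  have hg0 : g 0 = W a₁ := by simp [g]
  have hg1 : g 1 = W a₂ := by simp [g]
  have hghalf : g (1 / 2) = W (midpoint ℝ a₁ a₂) := by
    simp only [g, midpoint_eq_smul_add, invOf_eq_inv]
    congr 1
    module
  linarith [add_sub_two_mul_half_le_of_iteratedDeriv_two_le hg hgc]

lemma dimH_le_dimH_image_of_dist_le_mul {X Y : Type*} [MetricSpace X] [MetricSpace Y]
    {s : Set X} {f : X → Y} {K : ℝ}
    (h : ∀ x ∈ s, ∀ y ∈ s, dist x y ≤ K * dist (f x) (f y)) :
    dimH s ≤ dimH (f '' s) := by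
  have hanti : AntilipschitzWith K.toNNReal (s.domRestrict f) :=
    .of_le_mul_dist fun x y => (h x x.2 y y.2).trans <|
      mul_le_mul_of_nonneg_right (Real.le_coe_toNNReal K) dist_nonneg
  calc dimH s = dimH (Subtype.val '' (univ : Set s)) := by rw [image_univ, Subtype.range_coe]
    _ = dimH (univ : Set s) := isometry_subtype_coe.dimH_image _
    _ ≤ dimH (s.domRestrict f '' univ) := hanti.le_dimH_image _
    _ = dimH (f '' s) := by rw [image_univ, range_domRestrict]

def firstCoords {M ν : ℕ} (hν : ν ≤ M) :
    EuclideanSpace ℝ (Fin M) →ₗ[ℝ] EuclideanSpace ℝ (Fin ν) where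
  toFun a := WithLp.toLp 2 fun j => a (Fin.castLE hν j)
  map_add' _ _ := rfl
  map_smul' _ _ := rfl

lemma norm_firstCoords_sq {M ν : ℕ} (hν : ν ≤ M) (v : EuclideanSpace ℝ (Fin M)) :
    ‖firstCoords hν v‖ ^ 2 = ∑ i : Fin M, if (i : ℕ) < ν then v i ^ 2 else 0 := by
  have hmap :
      Finset.univ.map (Fin.castLEEmb hν) = Finset.univ.filter fun i : Fin M => i < ν := by
    ext i
    simp only [Finset.mem_map, Finset.mem_univ, true_and, Finset.mem_filter, Fin.castLEEmb_apply]
    exact Set.ext_iff.1 (Fin.range_castLE hν) i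
  rw [EuclideanSpace.real_norm_sq_eq, ← Finset.sum_filter, ← hmap, Finset.sum_map]
  rfl

lemma sum_signed_sq_eq {M ν : ℕ} (hν : ν ≤ M) (v : EuclideanSpace ℝ (Fin M)) :
    (∑ i : Fin M, if (i : ℕ) < ν then v i ^ 2 else -(v i ^ 2)) =
      2 * ‖firstCoords hν v‖ ^ 2 - ‖v‖ ^ 2 := by
  rw [norm_firstCoords_sq, EuclideanSpace.real_norm_sq_eq, Finset.mul_sum,
    ← Finset.sum_sub_distrib]
  refine Finset.sum_congr rfl fun i _ => ?_
  split_ifs <;> ring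

lemma sq_norm_sub_le_of_midpoint_le {M ν : ℕ} (hν : ν ≤ M) {ε : ℝ}
    {X : Set (EuclideanSpace ℝ (Fin M))} (hX : Convex ℝ X)
    {W : EuclideanSpace ℝ (Fin M) → ℝ} (hW : ContDiff ℝ 2 W)
    (hHess : ∀ a ∈ X, ∀ v : EuclideanSpace ℝ (Fin M),
      |iteratedDeriv 2 (fun t : ℝ => W (a + t • v)) 0 -
          (∑ i : Fin M, if (i : ℕ) < ν then v i ^ 2 else -(v i ^ 2))| ≤ ε * ‖v‖ ^ 2)
    {a₁ a₂ : EuclideanSpace ℝ (Fin M)} (h₁ : a₁ ∈ X) (h₂ : a₂ ∈ X)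
    (hmid : W (midpoint ℝ a₁ a₂) ≤ (W a₁ + W a₂) / 2) :
    (1 - ε) * ‖a₂ - a₁‖ ^ 2 ≤ 2 * ‖firstCoords hν (a₂ - a₁)‖ ^ 2 := by
  have h :
      0 ≤ 2 * ‖firstCoords hν (a₂ - a₁)‖ ^ 2 - ‖a₂ - a₁‖ ^ 2 + ε * ‖a₂ - a₁‖ ^ 2 := by
    refine nonneg_of_midpoint_le_of_iteratedDeriv_two_le hW (fun a ha => ?_) hmid
    rw [← sum_signed_sq_eq hν]
    linarith [(abs_le.1 (hHess a (hX.segment_subset h₁ h₂ ha) (a₂ - a₁))).2]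
  linarith

theorem hausdorff_dimension_bound_of_wConvex_general
    (M ν : ℕ) (hν : ν ≤ M) (ε : ℝ) (hε1 : ε < 1)
    (X : Set (EuclideanSpace ℝ (Fin M))) (hX : Convex ℝ X)
    (W : EuclideanSpace ℝ (Fin M) → ℝ) (hW : ContDiff ℝ 2 W)
    (hHess : ∀ a ∈ X, ∀ v : EuclideanSpace ℝ (Fin M),
      |iteratedDeriv 2 (fun t : ℝ => W (a + t • v)) 0 -
          (∑ i : Fin M, if (i : ℕ) < ν then v i ^ 2 else -(v i ^ 2))| ≤ ε * ‖v‖ ^ 2)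
    (Ξ : Set (EuclideanSpace ℝ (Fin M))) (hΞX : Ξ ⊆ X)
    (hconv : ∀ a₁ ∈ Ξ, ∀ a₂ ∈ Ξ, ∀ t ∈ Set.Icc (0 : ℝ) 1,
      W (t • a₁ + (1 - t) • a₂) ≤ t * W a₁ + (1 - t) * W a₂) :
    dimH Ξ ≤ (ν : ℝ≥0∞) := by
  have hdist : ∀ a₁ ∈ Ξ, ∀ a₂ ∈ Ξ,
      dist a₁ a₂ ≤ √(2 / (1 - ε)) * dist (firstCoords hν a₁) (firstCoords hν a₂) := by
    intro a₁ h₁ a₂ h₂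
    have hmid : W (midpoint ℝ a₁ a₂) ≤ (W a₁ + W a₂) / 2 := by
      have := hconv a₁ h₁ a₂ h₂ (1 / 2) ⟨by norm_num, by norm_num⟩
      rw [midpoint_eq_smul_add, invOf_eq_inv, smul_add]
      norm_num at this
      linarith
    have hsq := sq_norm_sub_le_of_midpoint_le hν hX hW hHess (hΞX h₁) (hΞX h₂) hmid
    have h1ε : 0 < 1 - ε := sub_pos.2 hε1
    rw [dist_comm, dist_comm (firstCoords hν a₁), dist_eq_norm, dist_eq_norm, ← map_sub]
    refine le_of_pow_le_pow_left₀ two_ne_zero (by positivity) ?_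
    rw [mul_pow, Real.sq_sqrt (by positivity), div_mul_eq_mul_div, le_div_iff₀ h1ε]
    linarith
  calc dimH Ξ ≤ dimH (firstCoords hν '' Ξ) := dimH_le_dimH_image_of_dist_le_mul hdist
    _ ≤ dimH (univ : Set (EuclideanSpace ℝ (Fin ν))) := dimH_mono (subset_univ _)
    _ = ν := by rw [Real.dimH_univ_eq_finrank, finrank_euclideanSpace_fin]

/-- Hausdorff dimension bound for W-convex sets (local Frostman-type bound): if on a convex
set `X` the second derivative of `W` along every direction `v` is within `ε‖v‖²` of the
quadratic form with `ν` eigenvalues `+1` and `M − ν` eigenvalues `−1`, then every W-convex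
subset `Ξ ⊆ X` has Hausdorff dimension at most `ν`. -/
theorem hausdorff_dimension_bound_of_wConvex
    (M ν : ℕ) (hν : ν ≤ M) (ε : ℝ) (hε0 : 0 < ε) (hε1 : ε < 1)
    (X : Set (EuclideanSpace ℝ (Fin M))) (hX : Convex ℝ X)
    (W : EuclideanSpace ℝ (Fin M) → ℝ) (hW : ContDiff ℝ 2 W)
    (hHess : ∀ a ∈ X, ∀ v : EuclideanSpace ℝ (Fin M),
      |iteratedDeriv 2 (fun t : ℝ => W (a + t • v)) 0 -
          (∑ i : Fin M, if (i : ℕ) < ν then v i ^ 2 else -(v i ^ 2))| ≤ ε * ‖v‖ ^ 2)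
    (Ξ : Set (EuclideanSpace ℝ (Fin M))) (hΞX : Ξ ⊆ X)
    (hconv : ∀ a₁ ∈ Ξ, ∀ a₂ ∈ Ξ, ∀ t ∈ Set.Icc (0 : ℝ) 1,
      W (t • a₁ + (1 - t) • a₂) ≤ t * W a₁ + (1 - t) * W a₂) :
    dimH Ξ ≤ (ν : ℝ≥0∞) :=
  hausdorff_dimension_bound_of_wConvex_general M ν hν ε hε1 X hX W hW hHess Ξ hΞX hconv
end

section
/- Let Ω be a compact metric space, E a finite-dimensional real inner product space, ε > 0, and G : E × Ω → E jointly continuous such that for each ω ∈ Ω, ⟨G(a₁, ω) − G(a₂, ω), a₁ − a₂⟩ ≤ −ε‖a₁ − a₂‖² for all a₁, a₂ ∈ E. Let μ_n (n ∈ ℕ) and μ be Borel probability measures on Ω with μ_n → μ weakly, and let a_n, a∞ ∈ E satisfy ∫ G(a_n, ω) dμ_n(ω) = 0 for each n and ∫ G(a∞, ω) dμ(ω) = 0. Then a_n → a∞. -/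
open MeasureTheory Filter
open scoped RealInnerProductSpace

/-- Continuity of the equilibrium action in the belief: if `μ_n → μ` weakly on a compact
metric state space and `G` is jointly continuous and ε-strongly monotone in the action,
then the equilibrium actions `a_n` (zeros of `∫ G(·, ω) dμ_n`) converge to the equilibrium
action `a∞` for `μ`. -/
theorem equilibrium_action_continuous_in_belief
    {Ω : Type*} [MetricSpace Ω] [CompactSpace Ω] [MeasurableSpace Ω] [BorelSpace Ω]
    {E : Type*} [NormedAddCommGroup E] [InnerProductSpace ℝ E] [FiniteDimensional ℝ E]
    (ε : ℝ) (hε : 0 < ε)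
    (G : E → Ω → E) (hGcont : Continuous fun p : E × Ω => G p.1 p.2)
    (hmono : ∀ (ω : Ω) (a₁ a₂ : E), ⟪G a₁ ω - G a₂ ω, a₁ - a₂⟫ ≤ -ε * ‖a₁ - a₂‖ ^ 2)
    (μseq : ℕ → Measure Ω) (μ : Measure Ω)
    [∀ n, IsProbabilityMeasure (μseq n)] [IsProbabilityMeasure μ]
    (hweak : ∀ f : Ω → ℝ, Continuous f →
      Tendsto (fun n => ∫ ω, f ω ∂(μseq n)) atTop (nhds (∫ ω, f ω ∂μ)))
    (aseq : ℕ → E) (ainf : E)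
    (ha : ∀ n, ∫ ω, G (aseq n) ω ∂(μseq n) = 0)
    (hainf : ∫ ω, G ainf ω ∂μ = 0) :
    Tendsto aseq atTop (nhds ainf) := by
  have hGa : ∀ a : E, Continuous fun ω => G a ω := fun a =>
    hGcont.comp (Continuous.prodMk_right a)
  have hint : ∀ (a : E) (ν : Measure Ω) [IsProbabilityMeasure ν], Integrable (fun ω => G a ω) ν :=
    fun a ν _ => (hGa a).integrable_of_hasCompactSupport (HasCompactSupport.of_compactSpace _)
  -- c n := ∫ G ainf dμ_n tends to 0
  set c : ℕ → E := fun n => ∫ ω, G ainf ω ∂(μseq n) with hc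
  have hcten : Tendsto c atTop (nhds 0) := by
    -- use orthonormal basis coordinates
    obtain ⟨w, b, -⟩ := exists_orthonormalBasis ℝ E
    have hrepr : ∀ n, c n = ∑ i, ⟪b i, c n⟫ • b i := fun n => (b.sum_repr' (c n)).symm
    have h0 : (0 : E) = ∑ i : w, (0:ℝ) • b i := by simp
    rw [show (nhds (0:E)) = nhds (∑ i : w, (0:ℝ) • b i) by rw [← h0]]
    refine Tendsto.congr (fun n => (hrepr n).symm) ?_
    apply tendsto_finset_sum
    intro i _
    apply Tendsto.smul_const
    have hcoord : ∀ n, ⟪b i, c n⟫ = ∫ ω, ⟪b i, G ainf ω⟫ ∂(μseq n) := by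
      intro n
      rw [hc, ← integral_inner (hint ainf (μseq n))]
    simp only [hcoord]
    have hfcont : Continuous fun ω => ⟪b i, G ainf ω⟫ :=
      (continuous_const.inner (hGa ainf))
    have := hweak _ hfcont
    have hlim : ∫ ω, ⟪b i, G ainf ω⟫ ∂μ = 0 := by
      rw [integral_inner (hint ainf μ), hainf]; simp
    rwa [hlim] at this
  -- key inequality: ε ‖aseq n - ainf‖ ≤ ‖c n‖
  have key : ∀ n, ‖aseq n - ainf‖ ≤ ε⁻¹ * ‖c n‖ := by
    intro n
    set d := aseq n - ainf with hd
    have hineq : ε * ‖d‖ ^ 2 ≤ ⟪c n, d⟫ := by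
      have h1 : ∫ ω, ⟪G (aseq n) ω - G ainf ω, d⟫ ∂(μseq n) ≤ -ε * ‖d‖ ^ 2 := by
        have hintg : Integrable (fun ω => ⟪G (aseq n) ω - G ainf ω, d⟫) (μseq n) :=
          (((hGa (aseq n)).sub (hGa ainf)).inner continuous_const).integrable_of_hasCompactSupport
            (HasCompactSupport.of_compactSpace _)
        have := integral_mono (μ := μseq n) hintg (integrable_const (-ε * ‖d‖ ^ 2))
          (fun ω => hmono ω (aseq n) ainf)
        simpa using this
      have h2 : ∫ ω, ⟪G (aseq n) ω - G ainf ω, d⟫ ∂(μseq n) = ⟪-c n, d⟫ := by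
        rw [show (fun ω => ⟪G (aseq n) ω - G ainf ω, d⟫)
            = fun ω => ⟪d, G (aseq n) ω - G ainf ω⟫ by
          funext ω; rw [real_inner_comm]]
        have hsub : Integrable (fun ω => G (aseq n) ω - G ainf ω) (μseq n) :=
          (hint (aseq n) (μseq n)).sub (hint ainf (μseq n))
        rw [integral_inner hsub]
        rw [integral_sub (hint (aseq n) (μseq n)) (hint ainf (μseq n)), ha n]
        rw [real_inner_comm]
        simp [hc]
      rw [h2] at h1
      have : ⟪-c n, d⟫ = -⟪c n, d⟫ := by simp
      rw [this] at h1
      linarith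
    have hcs : ⟪c n, d⟫ ≤ ‖c n‖ * ‖d‖ := real_inner_le_norm _ _
    have hd0 : 0 ≤ ‖d‖ := norm_nonneg _
    rcases eq_or_lt_of_le hd0 with h | h
    · rw [← h]; positivity
    · have : ε * ‖d‖ ≤ ‖c n‖ := by
        have := hineq.trans hcs
        nlinarith
      have h2 := mul_le_mul_of_nonneg_left this (le_of_lt (inv_pos.mpr hε))
      rwa [← mul_assoc, inv_mul_cancel₀ hε.ne', one_mul] at h2
  -- conclude
  rw [tendsto_iff_norm_sub_tendsto_zero]
  have hten : Tendsto (fun n => ε⁻¹ * ‖c n‖) atTop (nhds 0) := by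
    have := (hcten.norm).const_mul ε⁻¹
    simpa using this
  exact squeeze_zero (fun n => norm_nonneg _) key hten
end
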